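/- Let d ≥ 2 and m ≥ 2. The map S : 𝒜̇_{m-1}(ℝ^d) → 𝒫̇_m(ℝ^d)^d defined by S[p] = U + V is linear and injective, and for every p ∈ 𝒜̇_{m-1}(ℝ^d) the pair (S[p], p) is a solution of the Stokes system (SH), i.e. (S[p],p) ∈ Ṡ_m(ℝ^d_+). -/

import Mathlib

open MvPolynomial

noncomputable section

/-- The horizontal Laplacian `Δ' = ∂_1² + ⋯ + ∂_{d-1}²` acting on polynomials on
`ℝ^d = ℝ^{n+1}`, where the last variable is `y`. -/
def lapX (n : ℕ) : Module.End ℝ (MvPolynomial (Fin (n + 1)) ℝ) :=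
  ∑ i : Fin n,
    ((pderiv (R := ℝ) i.castSucc).toLinearMap ∘ₗ (pderiv (R := ℝ) i.castSucc).toLinearMap)

/-- The full Laplacian `Δ = Δ' + ∂_y²`. -/
def lapFull (n : ℕ) : Module.End ℝ (MvPolynomial (Fin (n + 1)) ℝ) :=
  lapX n +
    ((pderiv (R := ℝ) (Fin.last n)).toLinearMap ∘ₗ (pderiv (R := ℝ) (Fin.last n)).toLinearMap)

/-- The operator `Δ_D^{-1}`, determined on a monomial `x^α y^l` by
`Δ_D^{-1}(x^α y^l) = Σ_{j≥0} ((-1)^j l!/(l+2j+2)!) ((Δ')^j x^α) y^{l+2j+2}`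
(a finite sum: the terms with `2j > |α|` vanish, so truncating the sum at the total
degree of the monomial loses nothing), extended linearly. -/
def deltaDInv (n : ℕ) (p : MvPolynomial (Fin (n + 1)) ℝ) : MvPolynomial (Fin (n + 1)) ℝ :=
  ∑ σ ∈ p.support,
    ∑ j ∈ Finset.range ((σ.sum fun _ e => e) + 1),
      (coeff σ p * ((-1 : ℝ) ^ j * ((σ (Fin.last n)).factorial : ℝ) /
          ((σ (Fin.last n) + 2 * j + 2).factorial : ℝ))) •
        (((lapX n) ^ j) (monomial (σ.erase (Fin.last n)) (1 : ℝ)) *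
          (X (Fin.last n)) ^ (σ (Fin.last n) + 2 * j + 2))


/-- The substitution `y ↦ 0`: it sends `f(x,y)` to the polynomial `(x,y) ↦ f(x,0)`. -/
def setY0 (n : ℕ) : MvPolynomial (Fin (n + 1)) ℝ →ₐ[ℝ] MvPolynomial (Fin (n + 1)) ℝ :=
  aeval (fun i => if i = Fin.last n then 0 else X i)

/-- Integration in the first variable from `0` to `x₁`:
`(intX0 g)(x) = ∫_0^{x₁} g(z, x₂, …) dz`, given termwise on monomials by
`∫_0^{x₁} x₁^k dx₁ = x₁^{k+1}/(k+1)`. -/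
def intX0 (n : ℕ) (g : MvPolynomial (Fin (n + 1)) ℝ) : MvPolynomial (Fin (n + 1)) ℝ :=
  ∑ σ ∈ g.support,
    (coeff σ g / ((σ 0 : ℝ) + 1)) • monomial (σ + Finsupp.single 0 1) (1 : ℝ)

/-- `c_{m-1}(x) = -∫_0^{x₁} (∂_y p)(z, x₂,…,x_{d-1}, 0) dz`. -/
def cpoly (n : ℕ) (p : MvPolynomial (Fin (n + 1)) ℝ) : MvPolynomial (Fin (n + 1)) ℝ :=
  - intX0 n (setY0 n (pderiv (R := ℝ) (Fin.last n) p))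

/-- `V₁(x,y) = Σ_{j≥0} ((-1)^j/(2j+1)!) ((Δ')^j c_{m-1})(x) y^{2j+1}` (a finite sum:
all terms with `j > m` vanish, so we truncate at `m`). -/
def V1 (n m : ℕ) (p : MvPolynomial (Fin (n + 1)) ℝ) : MvPolynomial (Fin (n + 1)) ℝ :=
  ∑ j ∈ Finset.range (m + 1),
    ((-1 : ℝ) ^ j / ((2 * j + 1).factorial : ℝ)) •
      (((lapX n) ^ j) (cpoly n p) * (X (Fin.last n)) ^ (2 * j + 1))

/-- The map `S[p] = U + V = Δ_D^{-1}∇p + (V₁,0,…,0)`. -/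
def Smap (n m : ℕ) (p : MvPolynomial (Fin (n + 1)) ℝ) :
    Fin (n + 1) → MvPolynomial (Fin (n + 1)) ℝ :=
  fun k => deltaDInv n (pderiv (R := ℝ) k p) +
    (if k = (0 : Fin (n + 1)) then V1 n m p else 0)

/-- `(u,p) ∈ Ṡ_m(ℝ^d_+)`: `u ∈ 𝒫̇_m(ℝ^d)^d`, `p ∈ 𝒫̇_{m-1}(ℝ^d)`, and `(u,p)` solves the
Stokes system (SH): `-Δu + ∇p = 0`, `∇·u = 0` (in `ℝ^d_+`, equivalently as polynomial
identities), and `u(x,0) = 0` for all `x ∈ ℝ^{d-1}`. -/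
def IsDotStokes (n m : ℕ) (u : Fin (n + 1) → MvPolynomial (Fin (n + 1)) ℝ)
    (p : MvPolynomial (Fin (n + 1)) ℝ) : Prop :=
  (∀ k, (u k).IsHomogeneous m) ∧ p.IsHomogeneous (m - 1) ∧
  (∀ k, - lapFull n (u k) + pderiv (R := ℝ) k p = 0) ∧
  (∑ k : Fin (n + 1), pderiv (R := ℝ) k (u k)) = 0 ∧
  (∀ (x : Fin n → ℝ) (k : Fin (n + 1)), eval (Fin.snoc x 0) (u k) = 0)

section Prelim

variable {n : ℕ}

abbrev PP (n : ℕ) := MvPolynomial (Fin (n + 1)) ℝ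

lemma pderiv_comm' (i j : Fin (n+1)) (f : PP n) :
    pderiv (R := ℝ) i (pderiv (R := ℝ) j f) = pderiv (R := ℝ) j (pderiv (R := ℝ) i f) := by
  induction f using MvPolynomial.induction_on' with
  | monomial s a =>
    rcases eq_or_ne i j with rfl | hij
    · rfl
    · have h1 : j ≠ i := Ne.symm hij
      have hidx : s - Finsupp.single j 1 - Finsupp.single i 1
          = s - Finsupp.single i 1 - Finsupp.single j 1 := by
        ext a; simp only [Finsupp.tsub_apply]; omega
      simp only [pderiv_monomial, Finsupp.tsub_apply, Finsupp.single_apply, if_neg hij,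
        if_neg h1, Nat.sub_zero, hidx]
      ring_nf
  | add p q hp hq => simp [map_add, hp, hq]

lemma lapX_apply (f : PP n) :
    lapX n f = ∑ i : Fin n, pderiv (R := ℝ) i.castSucc (pderiv (R := ℝ) i.castSucc f) := by
  simp [lapX, LinearMap.sum_apply]

lemma lapFull_apply (f : PP n) :
    lapFull n f = lapX n f + pderiv (R := ℝ) (Fin.last n) (pderiv (R := ℝ) (Fin.last n) f) := by
  simp [lapFull]

lemma pderiv_lapX_comm (i : Fin (n+1)) (f : PP n) :
    pderiv (R := ℝ) i (lapX n f) = lapX n (pderiv (R := ℝ) i f) := by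
  rw [lapX_apply, lapX_apply, map_sum]
  exact Finset.sum_congr rfl fun c _ => by rw [pderiv_comm' i, pderiv_comm' i]

lemma pderiv_lapX_pow_comm (i : Fin (n+1)) (j : ℕ) (f : PP n) :
    pderiv (R := ℝ) i ((lapX n ^ j) f) = (lapX n ^ j) (pderiv (R := ℝ) i f) := by
  induction j generalizing f with
  | zero => simp
  | succ j ih => rw [pow_succ, Module.End.mul_apply, Module.End.mul_apply, ih, pderiv_lapX_comm]

lemma lapX_pow_succ_apply (j : ℕ) (f : PP n) :
    (lapX n ^ (j+1)) f = (lapX n ^ j) (lapX n f) := by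
  rw [pow_succ, Module.End.mul_apply]

end Prelim
section YFdeg

variable {n : ℕ}

lemma csl (i : Fin n) : i.castSucc ≠ Fin.last n := (Fin.castSucc_lt_last i).ne

/-- `f` does not involve the variable `y` (support version). -/
def YF (f : PP n) : Prop := ∀ σ ∈ f.support, σ (Fin.last n) = 0

lemma YF_monomial {τ : Fin (n+1) →₀ ℕ} (h : τ (Fin.last n) = 0) (a : ℝ) :
    YF (monomial τ a) := fun σ hσ => by
  rcases Finset.mem_singleton.1 (support_monomial_subset hσ) with rfl; exact h

lemma YF_sum {ι : Type*} {s : Finset ι} {g : ι → PP n} (h : ∀ i ∈ s, YF (g i)) :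
    YF (∑ i ∈ s, g i) := by
  classical
  intro σ hσ
  rcases Finset.mem_biUnion.1 (MvPolynomial.support_sum hσ) with ⟨i, hi, hσi⟩
  exact h i hi σ hσi

lemma YF.pderiv_last {f : PP n} (h : YF f) : pderiv (R := ℝ) (Fin.last n) f = 0 := by
  conv_lhs => rw [f.as_sum]
  rw [map_sum]
  refine Finset.sum_eq_zero fun σ hσ => ?_
  rw [pderiv_monomial, h σ hσ]; simp

lemma YF_pderiv {f : PP n} (h : YF f) {i : Fin (n+1)} (hi : i ≠ Fin.last n) :
    YF (pderiv (R := ℝ) i f) := by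
  have hrw : pderiv (R := ℝ) i f
      = ∑ τ ∈ f.support, monomial (τ - Finsupp.single i 1) (coeff τ f * (τ i : ℝ)) := by
    conv_lhs => rw [f.as_sum]
    rw [map_sum]; exact Finset.sum_congr rfl fun τ _ => pderiv_monomial
  rw [hrw]
  refine YF_sum fun τ hτ => YF_monomial ?_ _
  rw [Finsupp.tsub_apply, h τ hτ, Finsupp.single_apply, if_neg hi]; omega

lemma YF_lapX {f : PP n} (h : YF f) : YF (lapX n f) := by
  rw [lapX_apply]
  exact YF_sum fun i _ => YF_pderiv (YF_pderiv h (csl i)) (csl i)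

lemma YF_lapX_pow {f : PP n} (h : YF f) (j : ℕ) : YF ((lapX n ^ j) f) := by
  induction j with
  | zero => simpa using h
  | succ j ih => rw [pow_succ', Module.End.mul_apply]; exact YF_lapX ih

lemma YF_smul {f : PP n} (h : YF f) (c : ℝ) : YF (c • f) := fun σ hσ =>
  h σ (MvPolynomial.support_smul hσ)

lemma YF_neg {f : PP n} (h : YF f) : YF (-f) := fun σ hσ => by
  rw [MvPolynomial.support_neg] at hσ; exact h σ hσ

lemma degE (σ : Fin (n+1) →₀ ℕ) : (σ.sum fun _ e => e) = σ.degree := rfl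

lemma degree_add (a b : Fin (n+1) →₀ ℕ) : (a + b).degree = a.degree + b.degree := by
  rw [Finsupp.degree_eq_weight_one, map_add]

lemma degree_single (i : Fin (n+1)) (e : ℕ) : (Finsupp.single i e).degree = e := by
  rw [Finsupp.degree_eq_weight_one, Finsupp.weight_apply, Finsupp.sum_single_index] <;> simp

lemma degree_erase_add (σ : Fin (n+1) →₀ ℕ) :
    (σ.erase (Fin.last n)).degree + σ (Fin.last n) = σ.degree := by
  conv_rhs => rw [← Finsupp.erase_add_single (Fin.last n) σ]
  rw [degree_add, degree_single]

lemma degree_sub_single {σ : Fin (n+1) →₀ ℕ} {i : Fin (n+1)} (h : σ i ≠ 0) :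
    σ.degree = (σ - Finsupp.single i 1).degree + 1 := by
  have : σ = (σ - Finsupp.single i 1) + Finsupp.single i 1 := by
    ext a; simp only [Finsupp.tsub_apply, Finsupp.add_apply, Finsupp.single_apply]
    split_ifs with hia
    · subst hia; omega
    · omega
  conv_lhs => rw [this]
  rw [degree_add, degree_single]

lemma isHomog_iff {f : PP n} {k : ℕ} :
    f.IsHomogeneous k ↔ ∀ σ ∈ f.support, σ.degree = k := by
  unfold MvPolynomial.IsHomogeneous MvPolynomial.IsWeightedHomogeneous
  rw [Finsupp.degree_eq_weight_one]
  constructor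
  · exact fun h σ hσ => h (MvPolynomial.mem_support_iff.1 hσ)
  · exact fun h σ hσ => h σ (MvPolynomial.mem_support_iff.2 hσ)

lemma homog_smul {f : PP n} {k : ℕ} (h : f.IsHomogeneous k) (c : ℝ) :
    (c • f).IsHomogeneous k := by
  rw [MvPolynomial.smul_eq_C_mul]; exact h.C_mul c

lemma homog_pderiv {f : PP n} {k : ℕ} (h : f.IsHomogeneous k) (i : Fin (n+1)) :
    (pderiv (R := ℝ) i f).IsHomogeneous (k - 1) := by
  conv_lhs => rw [f.as_sum]
  rw [map_sum]
  refine MvPolynomial.IsHomogeneous.sum _ _ _ fun σ hσ => ?_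
  rw [pderiv_monomial]
  rcases eq_or_ne (σ i) 0 with h0 | h0
  · rw [h0]; simp only [Nat.cast_zero, mul_zero, map_zero]
    exact MvPolynomial.isHomogeneous_zero _ _ _
  · refine MvPolynomial.isHomogeneous_monomial _ ?_
    have h1 := degree_sub_single h0
    have h2 := isHomog_iff.1 h σ hσ
    omega

lemma homog_zero_pderiv {f : PP n} (h : f.IsHomogeneous 0) (i : Fin (n+1)) :
    pderiv (R := ℝ) i f = 0 := by
  conv_lhs => rw [f.as_sum]
  rw [map_sum]
  refine Finset.sum_eq_zero fun σ hσ => ?_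
  have h2 := isHomog_iff.1 h σ hσ
  have : σ i = 0 := by
    have := Finsupp.le_degree i σ
    omega
  rw [pderiv_monomial, this]; simp

lemma homog_lapX {f : PP n} {k : ℕ} (h : f.IsHomogeneous k) :
    (lapX n f).IsHomogeneous (k - 2) := by
  rw [lapX_apply]
  refine MvPolynomial.IsHomogeneous.sum _ _ _ fun i _ => ?_
  have := homog_pderiv (homog_pderiv h i.castSucc) i.castSucc
  rwa [Nat.sub_sub] at this

lemma homog_lapX_pow {f : PP n} {k : ℕ} (h : f.IsHomogeneous k) (j : ℕ) :
    ((lapX n ^ j) f).IsHomogeneous (k - 2 * j) := by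
  induction j generalizing f k with
  | zero => simpa using h
  | succ j ih =>
    rw [lapX_pow_succ_apply]
    have := ih (homog_lapX h)
    rwa [show k - 2 - 2 * j = k - 2 * (j+1) by omega] at this

lemma lapX_eq_zero_of_le {f : PP n} {k : ℕ} (h : f.IsHomogeneous k) (hk : k ≤ 1) :
    lapX n f = 0 := by
  rw [lapX_apply]
  refine Finset.sum_eq_zero fun i _ => ?_
  rcases Nat.le_one_iff_eq_zero_or_eq_one.1 hk with rfl | rfl
  · rw [homog_zero_pderiv h, map_zero]
  · rw [homog_zero_pderiv (homog_pderiv h i.castSucc) i.castSucc]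

lemma lapX_pow_eq_zero {f : PP n} {k j : ℕ} (h : f.IsHomogeneous k) (hj : k < 2 * j) :
    (lapX n ^ j) f = 0 := by
  induction j generalizing f k with
  | zero => omega
  | succ j ih =>
    rw [lapX_pow_succ_apply]
    rcases le_or_gt k 1 with hk | hk
    · rw [lapX_eq_zero_of_le h hk, map_zero]
    · exact ih (homog_lapX h) (by omega)

end YFdeg
section Ser

variable {n : ℕ}

/-- The general series `Σ_j (-1)^j l!/(l+2j+s)! (Δ')^j g · y^(l+2j+s)`. -/
def ser (n : ℕ) (g : PP n) (l s N : ℕ) : PP n :=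
  ∑ j ∈ Finset.range N, ((-1:ℝ)^j * (l.factorial : ℝ) / ((l+2*j+s).factorial : ℝ)) •
    ((lapX n ^ j) g * X (Fin.last n) ^ (l + 2*j + s))

lemma ser_zero (l s N : ℕ) : ser n 0 l s N = 0 := by
  simp [ser]

lemma ser_smul (c : ℝ) (g : PP n) (l s N : ℕ) : ser n (c • g) l s N = c • ser n g l s N := by
  rw [ser, ser, Finset.smul_sum]
  refine Finset.sum_congr rfl fun j _ => ?_
  rw [map_smul, smul_mul_assoc, smul_comm]

lemma ser_add (g h : PP n) (l s N : ℕ) : ser n (g + h) l s N = ser n g l s N + ser n h l s N := by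
  rw [ser, ser, ser, ← Finset.sum_add_distrib]
  refine Finset.sum_congr rfl fun j _ => ?_
  rw [map_add, add_mul, smul_add]

lemma ser_neg (g : PP n) (l s N : ℕ) : ser n (-g) l s N = - ser n g l s N := by
  rw [show -g = (-1 : ℝ) • g by simp, ser_smul]; simp

lemma ser_congr {g : PP n} {r : ℕ} (hg : g.IsHomogeneous r) {l s N N' : ℕ}
    (h : r < 2 * N) (h' : N ≤ N') : ser n g l s N' = ser n g l s N := by
  refine (Finset.sum_subset (Finset.range_subset_range.2 h') fun j _ hj => ?_).symm
  rw [lapX_pow_eq_zero hg (by rw [Finset.mem_range, not_lt] at hj; omega), zero_mul, smul_zero]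

lemma ser_congr_lapX {g : PP n} {r : ℕ} (hg : g.IsHomogeneous r) {l s N N' : ℕ}
    (h : r < 2 * N + 2) (h' : N ≤ N') :
    ser n (lapX n g) l s N' = ser n (lapX n g) l s N := by
  refine (Finset.sum_subset (Finset.range_subset_range.2 h') fun j _ hj => ?_).symm
  rw [← lapX_pow_succ_apply, lapX_pow_eq_zero hg
    (by rw [Finset.mem_range, not_lt] at hj; omega), zero_mul, smul_zero]

lemma lapX_lapX_pow (j : ℕ) (f : PP n) : lapX n ((lapX n ^ j) f) = (lapX n ^ j) (lapX n f) := by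
  rw [← Module.End.mul_apply, ← pow_succ', lapX_pow_succ_apply]

lemma pderiv_mul_Ypow {f : PP n} {i : Fin (n+1)} (hi : i ≠ Fin.last n) (e : ℕ) :
    pderiv (R := ℝ) i (f * X (Fin.last n) ^ e) =
      pderiv (R := ℝ) i f * X (Fin.last n) ^ e := by
  rw [pderiv_mul, pderiv_pow, pderiv_X_of_ne (Ne.symm hi)]
  ring

lemma lapX_mul_Ypow (f : PP n) (e : ℕ) :
    lapX n (f * X (Fin.last n) ^ e) = lapX n f * X (Fin.last n) ^ e := by
  rw [lapX_apply, lapX_apply, Finset.sum_mul]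
  exact Finset.sum_congr rfl fun i _ => by
    rw [pderiv_mul_Ypow (csl i), pderiv_mul_Ypow (csl i)]

lemma pderiv_ser {i : Fin (n+1)} (hi : i ≠ Fin.last n) (g : PP n) (l s N : ℕ) :
    pderiv (R := ℝ) i (ser n g l s N) = ser n (pderiv (R := ℝ) i g) l s N := by
  rw [ser, ser, map_sum]
  refine Finset.sum_congr rfl fun j _ => ?_
  rw [Derivation.map_smul, pderiv_mul_Ypow hi, pderiv_lapX_pow_comm]

lemma lapX_ser (g : PP n) (l s N : ℕ) :
    lapX n (ser n g l s N) = ser n (lapX n g) l s N := by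
  rw [ser, ser, map_sum]
  refine Finset.sum_congr rfl fun j _ => ?_
  rw [map_smul, lapX_mul_Ypow, lapX_lapX_pow]

lemma Dy_mul_Ypow {f : PP n} (hf : YF f) (e : ℕ) :
    pderiv (R := ℝ) (Fin.last n) (f * X (Fin.last n) ^ (e+1)) =
      (((e+1 : ℕ) : ℝ)) • (f * X (Fin.last n) ^ e) := by
  rw [pderiv_mul, hf.pderiv_last, zero_mul, zero_add, pderiv_pow, pderiv_X_self,
    MvPolynomial.smul_eq_C_mul]
  simp only [mul_one, Nat.add_sub_cancel]
  rw [MvPolynomial.C_eq_coe_nat]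
  ring

lemma coef_fact_succ (c : ℝ) (a : ℕ) :
    (c / (((a+1).factorial : ℕ) : ℝ)) * (((a+1 : ℕ)) : ℝ) = c / ((a.factorial : ℕ) : ℝ) := by
  rw [Nat.factorial_succ]
  have h1 : ((a.factorial : ℕ) : ℝ) ≠ 0 := Nat.cast_ne_zero.2 (Nat.factorial_ne_zero a)
  have h2 : (((a:ℕ) + 1 : ℕ) : ℝ) ≠ 0 := by positivity
  push_cast at *
  field_simp

lemma Dy_ser {g : PP n} (hg : YF g) (l s N : ℕ) :
    pderiv (R := ℝ) (Fin.last n) (ser n g l (s+1) N) = ser n g l s N := by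
  rw [ser, ser, map_sum]
  refine Finset.sum_congr rfl fun j _ => ?_
  rw [Derivation.map_smul, show l + 2*j + (s+1) = (l + 2*j + s) + 1 from rfl,
    Dy_mul_Ypow (YF_lapX_pow hg j), smul_smul, coef_fact_succ]

lemma ser0_eq (g : PP n) (l N : ℕ) :
    ser n g l 0 (N+1) = g * X (Fin.last n) ^ l - ser n (lapX n g) l 2 N := by
  rw [ser, Finset.sum_range_succ']
  have h0 : ((-1:ℝ)^0 * (l.factorial : ℝ) / ((l+2*0+0).factorial : ℝ)) •
      ((lapX n ^ 0) g * X (Fin.last n) ^ (l+2*0+0)) = g * X (Fin.last n) ^ l := by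
    simp [div_self (Nat.cast_ne_zero.2 (Nat.factorial_ne_zero l) : ((l.factorial : ℕ):ℝ) ≠ 0)]
  rw [h0, sub_eq_add_neg, add_comm, ser, ← Finset.sum_neg_distrib]
  congr 1
  refine Finset.sum_congr rfl fun i _ => ?_
  rw [show l + 2*(i+1) + 0 = l + 2*i + 2 by omega, lapX_pow_succ_apply, pow_succ]
  rw [← neg_smul]
  congr 1
  ring

lemma Dy_ser00 {g : PP n} (hg : YF g) (N : ℕ) :
    pderiv (R := ℝ) (Fin.last n) (ser n g 0 0 (N+1)) = - ser n (lapX n g) 0 1 N := by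
  rw [ser, map_sum, Finset.sum_range_succ']
  have h0 : pderiv (R := ℝ) (Fin.last n)
      (((-1:ℝ)^0 * ((0:ℕ).factorial : ℝ) / ((0+2*0+0).factorial : ℝ)) •
        ((lapX n ^ 0) g * X (Fin.last n) ^ (0+2*0+0))) = 0 := by
    simp only [pow_zero, Nat.factorial_zero, Nat.cast_one, Module.End.one_apply, mul_one,
      Nat.mul_zero, Nat.add_zero, pow_zero]
    rw [Derivation.map_smul, hg.pderiv_last, smul_zero]
  rw [h0, add_zero, ser, ← Finset.sum_neg_distrib]
  refine Finset.sum_congr rfl fun i _ => ?_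
  rw [Derivation.map_smul, show (0:ℕ) + 2*(i+1) + 0 = (0 + 2*i + 1) + 1 by omega,
    Dy_mul_Ypow (YF_lapX_pow hg (i+1)), smul_smul, coef_fact_succ, lapX_pow_succ_apply, pow_succ]
  rw [← neg_smul]
  congr 1
  ring

lemma lapFull_ser2 {g : PP n} {r : ℕ} (hg : YF g) (hr : g.IsHomogeneous r) {l N : ℕ}
    (hrN : r ≤ 2 * N) :
    lapFull n (ser n g l 2 (N+1)) = g * X (Fin.last n) ^ l := by
  rw [lapFull_apply, lapX_ser,
    show ser n g l 2 (N+1) = ser n g l (1+1) (N+1) from rfl, Dy_ser hg,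
    show ser n g l 1 (N+1) = ser n g l (0+1) (N+1) from rfl, Dy_ser hg,
    ser0_eq, ser_congr_lapX hr (by omega) (Nat.le_succ N)]
  ring

lemma lapFull_ser1 {g : PP n} {r : ℕ} (hg : YF g) (hr : g.IsHomogeneous r) {N : ℕ}
    (hrN : r ≤ 2 * N) :
    lapFull n (ser n g 0 1 (N+1)) = 0 := by
  rw [lapFull_apply, lapX_ser,
    show ser n g 0 1 (N+1) = ser n g 0 (0+1) (N+1) from rfl, Dy_ser hg,
    Dy_ser00 hg, ser_congr_lapX hr (by omega) (Nat.le_succ N)]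
  ring

end Ser
section Ops

variable {n : ℕ}

/-- The monomial in the `x`-variables. -/
def mon (n : ℕ) (σ : Fin (n+1) →₀ ℕ) : PP n := monomial (σ.erase (Fin.last n)) (1:ℝ)

/-- `Δ_D^{-1}` of a single monomial, normalized. -/
def Aux (n : ℕ) (σ : Fin (n+1) →₀ ℕ) : PP n :=
  ser n (mon n σ) (σ (Fin.last n)) 2 (σ.degree + 1)

lemma YF_zero : YF (0 : PP n) := fun σ h => absurd h (by simp)

lemma mon_YF (σ : Fin (n+1) →₀ ℕ) : YF (mon n σ) :=
  YF_monomial (Finsupp.erase_same) 1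

lemma mon_homog (σ : Fin (n+1) →₀ ℕ) :
    (mon n σ).IsHomogeneous ((σ.erase (Fin.last n)).degree) :=
  MvPolynomial.isHomogeneous_monomial 1 rfl

lemma mon_mul_Ypow (σ : Fin (n+1) →₀ ℕ) :
    mon n σ * X (Fin.last n) ^ (σ (Fin.last n)) = monomial σ (1:ℝ) := by
  rw [mon, MvPolynomial.X_pow_eq_monomial, MvPolynomial.monomial_mul, one_mul,
    Finsupp.erase_add_single]

lemma deltaDInv_eq (p : PP n) :
    deltaDInv n p = ∑ σ ∈ p.support, coeff σ p • Aux n σ := by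
  rw [deltaDInv]
  refine Finset.sum_congr rfl fun σ _ => ?_
  rw [Aux, ser, Finset.smul_sum]
  exact Finset.sum_congr rfl fun j _ => by rw [smul_smul]; rfl

lemma supportSum_ext {f : PP n} {s : Finset (Fin (n+1) →₀ ℕ)} (hs : f.support ⊆ s)
    (G : (Fin (n+1) →₀ ℕ) → PP n) :
    ∑ σ ∈ f.support, coeff σ f • G σ = ∑ σ ∈ s, coeff σ f • G σ :=
  Finset.sum_subset hs fun σ _ hσ => by
    rw [MvPolynomial.notMem_support_iff.1 hσ, zero_smul]

lemma supportSum_add (G : (Fin (n+1) →₀ ℕ) → PP n) (p q : PP n) :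
    (∑ σ ∈ (p+q).support, coeff σ (p+q) • G σ)
      = (∑ σ ∈ p.support, coeff σ p • G σ) + (∑ σ ∈ q.support, coeff σ q • G σ) := by
  classical
  rw [supportSum_ext (MvPolynomial.support_add) G,
    supportSum_ext (Finset.subset_union_left (s₂ := q.support)) G,
    supportSum_ext (Finset.subset_union_right (s₁ := p.support)) G,
    ← Finset.sum_add_distrib]
  exact Finset.sum_congr rfl fun σ _ => by rw [MvPolynomial.coeff_add, add_smul]

lemma supportSum_smul (G : (Fin (n+1) →₀ ℕ) → PP n) (c : ℝ) (p : PP n) :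
    (∑ σ ∈ (c • p).support, coeff σ (c • p) • G σ) = c • ∑ σ ∈ p.support, coeff σ p • G σ := by
  rw [supportSum_ext (MvPolynomial.support_smul) G, Finset.smul_sum]
  exact Finset.sum_congr rfl fun σ _ => by rw [MvPolynomial.coeff_smul, smul_smul, smul_eq_mul]

lemma deltaDInv_add (p q : PP n) : deltaDInv n (p + q) = deltaDInv n p + deltaDInv n q := by
  rw [deltaDInv_eq, deltaDInv_eq, deltaDInv_eq]; exact supportSum_add _ p q

lemma deltaDInv_smul (c : ℝ) (p : PP n) : deltaDInv n (c • p) = c • deltaDInv n p := by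
  rw [deltaDInv_eq, deltaDInv_eq]; exact supportSum_smul _ c p

lemma deltaDInv_zero : deltaDInv n 0 = 0 := by simp [deltaDInv]

lemma deltaDInv_monomial (σ : Fin (n+1) →₀ ℕ) (c : ℝ) :
    deltaDInv n (monomial σ c) = c • Aux n σ := by
  rcases eq_or_ne c 0 with rfl | hc
  · rw [map_zero, deltaDInv_zero, zero_smul]
  · rw [deltaDInv_eq, MvPolynomial.support_monomial, if_neg hc, Finset.sum_singleton,
      MvPolynomial.coeff_monomial, if_pos rfl]

lemma deltaDInv_finsum {ι : Type*} (s : Finset ι) (g : ι → PP n) :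
    deltaDInv n (∑ i ∈ s, g i) = ∑ i ∈ s, deltaDInv n (g i) := by
  classical
  induction s using Finset.cons_induction with
  | empty => simpa using deltaDInv_zero
  | cons i s hi ih => rw [Finset.sum_cons, deltaDInv_add, ih, Finset.sum_cons]

lemma FTC (g : PP n) : pderiv (R := ℝ) 0 (intX0 n g) = g := by
  rw [intX0, map_sum]
  conv_rhs => rw [g.as_sum]
  refine Finset.sum_congr rfl fun σ _ => ?_
  have hne : ((σ 0 : ℝ) + 1) ≠ 0 := by positivity
  rw [Derivation.map_smul, pderiv_monomial, one_mul, add_tsub_cancel_right,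
    Finsupp.add_apply, Finsupp.single_apply, if_pos rfl,
    show (((σ 0 + 1 : ℕ)) : ℝ) = (σ 0 : ℝ) + 1 by push_cast; ring,
    MvPolynomial.smul_monomial, smul_eq_mul, div_mul_cancel₀ _ hne]

lemma setY0_monomial (σ : Fin (n+1) →₀ ℕ) (c : ℝ) :
    setY0 n (monomial σ c) = if σ (Fin.last n) = 0 then monomial σ c else 0 := by
  rw [setY0, aeval_monomial]
  split_ifs with h
  · have : (σ.prod fun i e => (if i = Fin.last n then 0 else X i) ^ e)
        = σ.prod fun i e => (X i : PP n) ^ e := by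
      refine Finset.prod_congr rfl fun i hi => ?_
      have hne : i ≠ Fin.last n := fun he => by
        rw [he] at hi; exact (Finsupp.mem_support_iff.1 hi) h
      simp only [if_neg hne]
    rw [this, MvPolynomial.monomial_eq, algebraMap_eq]
  · have hmem : Fin.last n ∈ σ.support := Finsupp.mem_support_iff.2 h
    rw [Finsupp.prod, Finset.prod_eq_zero hmem (by rw [if_pos rfl, zero_pow h]), mul_zero]

lemma YF_setY0 (f : PP n) : YF (setY0 n f) := by
  conv in setY0 n f => rw [f.as_sum]
  rw [map_sum]
  refine YF_sum fun σ _ => ?_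
  rw [setY0_monomial]
  split_ifs with h
  · exact YF_monomial h _
  · exact YF_zero

lemma setY0_homog {f : PP n} {k : ℕ} (h : f.IsHomogeneous k) :
    (setY0 n f).IsHomogeneous k := by
  conv in setY0 n f => rw [f.as_sum]
  rw [map_sum]
  refine MvPolynomial.IsHomogeneous.sum _ _ _ fun σ hσ => ?_
  rw [setY0_monomial]
  split_ifs with h0
  · exact MvPolynomial.isHomogeneous_monomial _ (isHomog_iff.1 h σ hσ)
  · exact MvPolynomial.isHomogeneous_zero _ _ _

lemma zero_ne_last (hn : 0 < n) : (0 : Fin (n+1)) ≠ Fin.last n := by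
  simp only [ne_eq, Fin.ext_iff, Fin.val_zero, Fin.val_last]
  omega

lemma YF_intX0 (hn : 0 < n) {g : PP n} (h : YF g) : YF (intX0 n g) := by
  rw [intX0]
  refine YF_sum fun σ hσ => YF_smul (YF_monomial ?_ _) _
  rw [Finsupp.add_apply, h σ hσ, Finsupp.single_apply, if_neg (zero_ne_last hn)]
  rfl

lemma intX0_homog {g : PP n} {k : ℕ} (h : g.IsHomogeneous k) :
    (intX0 n g).IsHomogeneous (k + 1) := by
  rw [intX0]
  refine MvPolynomial.IsHomogeneous.sum _ _ _ fun σ hσ => ?_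
  rw [MvPolynomial.smul_eq_C_mul]
  refine MvPolynomial.IsHomogeneous.C_mul ?_ _
  refine MvPolynomial.isHomogeneous_monomial _ ?_
  rw [degree_add, degree_single, isHomog_iff.1 h σ hσ]

lemma cpoly_YF (hn : 0 < n) (p : PP n) : YF (cpoly n p) :=
  YF_neg (YF_intX0 hn (YF_setY0 _))

lemma cpoly_homog {p : PP n} {m : ℕ} (hm : 2 ≤ m) (hp : p.IsHomogeneous (m-1)) :
    (cpoly n p).IsHomogeneous (m-1) := by
  have h1 := intX0_homog (setY0_homog (homog_pderiv hp (Fin.last n)))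
  rw [show m - 1 - 1 + 1 = m - 1 by omega] at h1
  exact h1.neg

lemma V1_eq (m : ℕ) (p : PP n) : V1 n m p = ser n (cpoly n p) 0 1 (m+1) := by
  rw [V1, ser]
  refine Finset.sum_congr rfl fun j _ => ?_
  norm_num

end Ops
section Comm

variable {n : ℕ}

lemma erase_sub_single {i : Fin (n+1)} (hi : i ≠ Fin.last n) (σ : Fin (n+1) →₀ ℕ) :
    (σ - Finsupp.single i 1).erase (Fin.last n) = σ.erase (Fin.last n) - Finsupp.single i 1 := by
  ext a
  rcases eq_or_ne a (Fin.last n) with rfl | ha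
  · rw [Finsupp.erase_same, Finsupp.tsub_apply, Finsupp.erase_same,
      Finsupp.single_apply, if_neg hi]
    omega
  · rw [Finsupp.erase_ne ha, Finsupp.tsub_apply, Finsupp.tsub_apply, Finsupp.erase_ne ha]

lemma erase_sub_single_last (σ : Fin (n+1) →₀ ℕ) :
    (σ - Finsupp.single (Fin.last n) 1).erase (Fin.last n) = σ.erase (Fin.last n) := by
  ext a
  rcases eq_or_ne a (Fin.last n) with rfl | ha
  · rw [Finsupp.erase_same, Finsupp.erase_same]
  · rw [Finsupp.erase_ne ha, Finsupp.tsub_apply, Finsupp.erase_ne ha,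
      Finsupp.single_apply, if_neg (Ne.symm ha)]
    omega

lemma erase_eq_self_of {σ : Fin (n+1) →₀ ℕ} (h : σ (Fin.last n) = 0) :
    σ.erase (Fin.last n) = σ := by
  ext a
  rcases eq_or_ne a (Fin.last n) with rfl | ha
  · rw [Finsupp.erase_same, h]
  · rw [Finsupp.erase_ne ha]

lemma pderiv_mon {i : Fin (n+1)} (hi : i ≠ Fin.last n) (σ : Fin (n+1) →₀ ℕ) :
    pderiv (R := ℝ) i (mon n σ) = ((σ i : ℕ) : ℝ) • mon n (σ - Finsupp.single i 1) := by
  rw [mon, mon, pderiv_monomial, one_mul, MvPolynomial.smul_monomial, smul_eq_mul, mul_one,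
    erase_sub_single hi, Finsupp.erase_ne hi]

lemma sub_single_last_apply (σ : Fin (n+1) →₀ ℕ) {i : Fin (n+1)} (hi : i ≠ Fin.last n) :
    ((σ - Finsupp.single i 1 : Fin (n+1) →₀ ℕ)) (Fin.last n) = σ (Fin.last n) := by
  rw [Finsupp.tsub_apply, Finsupp.single_apply, if_neg hi]
  omega

/-- `pderiv i` commutes with `Δ_D⁻¹` for horizontal `i`. -/
lemma pderiv_deltaDInv {i : Fin (n+1)} (hi : i ≠ Fin.last n) (f : PP n) :
    pderiv (R := ℝ) i (deltaDInv n f) = deltaDInv n (pderiv (R := ℝ) i f) := by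
  induction f using MvPolynomial.induction_on' with
  | add p q hp hq => rw [deltaDInv_add, map_add, hp, hq, map_add, deltaDInv_add]
  | monomial σ c =>
    rw [deltaDInv_monomial, Derivation.map_smul, Aux, pderiv_ser hi, pderiv_mon hi,
      ser_smul, pderiv_monomial, deltaDInv_monomial, Aux, sub_single_last_apply σ hi]
    rcases eq_or_ne (σ i) 0 with h0 | h0
    · rw [h0]; simp
    · have hle : ((σ - Finsupp.single i 1).erase (Fin.last n)).degree
          ≤ (σ - Finsupp.single i 1).degree := by
        have := degree_erase_add (σ - Finsupp.single i 1); omega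
      rw [smul_smul, ser_congr (mon_homog (σ - Finsupp.single i 1))
        (N := (σ - Finsupp.single i 1).degree + 1) (by omega)
        (by have := degree_sub_single (i := i) h0; omega)]

lemma ser_shift (g : PP n) (r N : ℕ) :
    ser n g (r+1) 1 N = (((r+1 : ℕ)) : ℝ) • ser n g r 2 N := by
  rw [ser, ser, Finset.smul_sum]
  refine Finset.sum_congr rfl fun j _ => ?_
  rw [show r + 1 + 2*j + 1 = r + 2*j + 2 by omega, smul_smul]
  congr 1
  rw [Nat.factorial_succ]
  push_cast
  ring

/-- The `y`-derivative of `Δ_D⁻¹` on a monomial. -/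
lemma Dy_deltaDInv_monomial (σ : Fin (n+1) →₀ ℕ) (c : ℝ) :
    pderiv (R := ℝ) (Fin.last n) (deltaDInv n (monomial σ c))
      = deltaDInv n (pderiv (R := ℝ) (Fin.last n) (monomial σ c))
        + ser n (setY0 n (monomial σ c)) 0 1 (σ.degree + 1) := by
  rw [deltaDInv_monomial, Derivation.map_smul, Aux, pderiv_monomial, deltaDInv_monomial,
    setY0_monomial]
  rcases eq_or_ne (σ (Fin.last n)) 0 with h0 | h0
  · rw [if_pos h0, h0,
      show ser n (mon n σ) 0 2 (σ.degree + 1) = ser n (mon n σ) 0 (1+1) (σ.degree + 1) from rfl,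
      Dy_ser (mon_YF σ),
      show monomial σ c = c • mon n σ by
        rw [mon, erase_eq_self_of h0, MvPolynomial.smul_monomial, smul_eq_mul, mul_one],
      ser_smul]
    simp
  · obtain ⟨t, ht⟩ : ∃ t, σ (Fin.last n) = t + 1 := ⟨σ (Fin.last n) - 1, by omega⟩
    have hmon : mon n (σ - Finsupp.single (Fin.last n) 1) = mon n σ := by
      rw [mon, mon, erase_sub_single_last]
    have hl : ((σ - Finsupp.single (Fin.last n) 1 : Fin (n+1) →₀ ℕ)) (Fin.last n) = t := by
      rw [Finsupp.tsub_apply, Finsupp.single_apply, if_pos rfl, ht]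
      omega
    have hdeg : σ.degree = (σ - Finsupp.single (Fin.last n) 1).degree + 1 :=
      degree_sub_single h0
    have hr : (σ.erase (Fin.last n)).degree + σ (Fin.last n) = σ.degree := degree_erase_add σ
    rw [if_neg h0, ser_zero, add_zero, Aux, hmon, hl, ht,
      show ser n (mon n σ) (t+1) 2 (σ.degree + 1) = ser n (mon n σ) (t+1) (1+1) (σ.degree + 1)
        from rfl,
      Dy_ser (mon_YF σ), ser_shift,
      ser_congr (mon_homog σ) (l := t) (s := 2)
        (show (σ.erase (Fin.last n)).degree < 2 * ((σ - Finsupp.single (Fin.last n) 1).degree + 1)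
          by omega)
        (show (σ - Finsupp.single (Fin.last n) 1).degree + 1 ≤ σ.degree + 1 by omega),
      smul_smul]

end Comm
section Main

variable {n : ℕ}

lemma lapFull_deltaDInv (f : PP n) : lapFull n (deltaDInv n f) = f := by
  rw [deltaDInv_eq, map_sum]
  conv_rhs => rw [f.as_sum]
  refine Finset.sum_congr rfl fun σ _ => ?_
  rw [map_smul, Aux, lapFull_ser2 (mon_YF σ) (mon_homog σ)
    (by have := degree_erase_add σ; omega), mon_mul_Ypow, MvPolynomial.smul_monomial, smul_eq_mul, mul_one]

lemma lapFull_V1 {m : ℕ} (hn : 0 < n) (hm : 2 ≤ m) {p : PP n}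
    (hp : p.IsHomogeneous (m-1)) : lapFull n (V1 n m p) = 0 := by
  rw [V1_eq]
  exact lapFull_ser1 (cpoly_YF hn p) (cpoly_homog hm hp) (by omega)

lemma ser_finsum {ι : Type*} (s : Finset ι) (g : ι → PP n) (l t N : ℕ) :
    ser n (∑ i ∈ s, g i) l t N = ∑ i ∈ s, ser n (g i) l t N := by
  classical
  induction s using Finset.cons_induction with
  | empty => simpa using ser_zero l t N
  | cons i s hi ih => rw [Finset.sum_cons, ser_add, ih, Finset.sum_cons]

lemma Dy_deltaDInv {f : PP n} {t : ℕ} (hf : f.IsHomogeneous t) :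
    pderiv (R := ℝ) (Fin.last n) (deltaDInv n f)
      = deltaDInv n (pderiv (R := ℝ) (Fin.last n) f) + ser n (setY0 n f) 0 1 (t + 1) := by
  calc pderiv (R := ℝ) (Fin.last n) (deltaDInv n f)
      = ∑ σ ∈ f.support,
          pderiv (R := ℝ) (Fin.last n) (deltaDInv n (monomial σ (coeff σ f))) := by
        conv_lhs => rw [f.as_sum]
        rw [deltaDInv_finsum, map_sum]
    _ = ∑ σ ∈ f.support,
          (deltaDInv n (pderiv (R := ℝ) (Fin.last n) (monomial σ (coeff σ f)))
            + ser n (setY0 n (monomial σ (coeff σ f))) 0 1 (t + 1)) := by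
        refine Finset.sum_congr rfl fun σ hσ => ?_
        rw [Dy_deltaDInv_monomial, isHomog_iff.1 hf σ hσ]
    _ = deltaDInv n (pderiv (R := ℝ) (Fin.last n) f) + ser n (setY0 n f) 0 1 (t + 1) := by
        rw [Finset.sum_add_distrib]
        congr 1
        · conv_rhs => rw [f.as_sum, map_sum, deltaDInv_finsum]
        · conv_rhs => rw [f.as_sum, map_sum, ser_finsum]

/-- The divergence of `S[p]` equals `Δ_D⁻¹ (Δ p)`. -/
lemma div_Smap {m : ℕ} (hn : 0 < n) (hm : 2 ≤ m) {p : PP n} (hp : p.IsHomogeneous (m-1)) :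
    (∑ k : Fin (n+1), pderiv (R := ℝ) k (Smap n m p k)) = deltaDInv n (lapFull n p) := by
  have hV : ∀ k : Fin (n+1),
      pderiv (R := ℝ) k (if k = (0 : Fin (n+1)) then V1 n m p else 0)
        = if k = (0 : Fin (n+1)) then pderiv (R := ℝ) (0 : Fin (n+1)) (V1 n m p) else 0 := by
    intro k; split_ifs with h
    · rw [h]
    · rw [map_zero]
  have h0last : (0 : Fin (n+1)) ≠ Fin.last n := zero_ne_last hn
  have hstep2 : pderiv (R := ℝ) (0 : Fin (n+1)) (V1 n m p)
      = - ser n (setY0 n (pderiv (R := ℝ) (Fin.last n) p)) 0 1 (m+1) := by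
    rw [V1_eq, pderiv_ser h0last, cpoly, map_neg, FTC, ser_neg]
  have hDy2 : (pderiv (R := ℝ) (Fin.last n) p).IsHomogeneous (m-1-1) :=
    homog_pderiv hp (Fin.last n)
  calc (∑ k : Fin (n+1), pderiv (R := ℝ) k (Smap n m p k))
      = (∑ k : Fin (n+1), pderiv (R := ℝ) k (deltaDInv n (pderiv (R := ℝ) k p)))
        + ∑ k : Fin (n+1),
            pderiv (R := ℝ) k (if k = (0 : Fin (n+1)) then V1 n m p else 0) := by
        rw [← Finset.sum_add_distrib]
        exact Finset.sum_congr rfl fun k _ => by rw [Smap, map_add]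
    _ = (deltaDInv n (lapX n p)
          + (deltaDInv n (pderiv (R := ℝ) (Fin.last n) (pderiv (R := ℝ) (Fin.last n) p))
            + ser n (setY0 n (pderiv (R := ℝ) (Fin.last n) p)) 0 1 (m-1-1+1)))
        + pderiv (R := ℝ) (0 : Fin (n+1)) (V1 n m p) := by
        congr 1
        · rw [Fin.sum_univ_castSucc]
          congr 1
          · rw [show deltaDInv n (lapX n p)
                = deltaDInv n (∑ i : Fin n,
                    pderiv (R := ℝ) i.castSucc (pderiv (R := ℝ) i.castSucc p)) by
                  rw [← lapX_apply],
              deltaDInv_finsum]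
            exact Finset.sum_congr rfl fun i _ => by rw [pderiv_deltaDInv (csl i)]
          · exact Dy_deltaDInv hDy2
        · rw [Finset.sum_congr rfl fun k _ => hV k, Finset.sum_ite_eq' Finset.univ,
            if_pos (Finset.mem_univ _)]
    _ = deltaDInv n (lapFull n p) := by
        rw [hstep2, ser_congr (setY0_homog hDy2) (N' := m+1) (N := m-1-1+1) (by omega) (by omega),
          lapFull_apply, deltaDInv_add]
        ring
end Main
section Final

variable {n : ℕ}

lemma eval_ser_zero (x : Fin n → ℝ) (g : PP n) {l s N : ℕ} (hs : s ≠ 0) :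
    eval (Fin.snoc x 0) (ser n g l s N) = 0 := by
  rw [ser, map_sum]
  refine Finset.sum_eq_zero fun j _ => ?_
  rw [MvPolynomial.smul_eq_C_mul, map_mul, eval_C, map_mul, map_pow, eval_X, Fin.snoc_last,
    zero_pow (by omega), mul_zero, mul_zero]

lemma eval_deltaDInv_zero (x : Fin n → ℝ) (f : PP n) :
    eval (Fin.snoc x 0) (deltaDInv n f) = 0 := by
  rw [deltaDInv_eq, map_sum]
  refine Finset.sum_eq_zero fun σ _ => ?_
  rw [MvPolynomial.smul_eq_C_mul, map_mul, eval_C, Aux, eval_ser_zero x _ (by omega), mul_zero]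

lemma eval_V1_zero (x : Fin n → ℝ) (m : ℕ) (p : PP n) :
    eval (Fin.snoc x 0) (V1 n m p) = 0 := by
  rw [V1_eq, eval_ser_zero x _ (by omega)]

lemma ser_homog {g : PP n} {r : ℕ} (hg : g.IsHomogeneous r) (l s N : ℕ) :
    (ser n g l s N).IsHomogeneous (r + l + s) := by
  rw [ser]
  refine MvPolynomial.IsHomogeneous.sum _ _ _ fun j _ => ?_
  rcases le_or_gt (2*j) r with hj | hj
  · refine homog_smul ?_ _
    have := (homog_lapX_pow hg j).mul (MvPolynomial.isHomogeneous_X_pow (Fin.last n) (l+2*j+s))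
    rwa [show r - 2*j + (l + 2*j + s) = r + l + s by omega] at this
  · rw [lapX_pow_eq_zero hg hj, zero_mul, smul_zero]
    exact MvPolynomial.isHomogeneous_zero _ _ _

lemma deltaDInv_homog {f : PP n} {t : ℕ} (hf : f.IsHomogeneous t) :
    (deltaDInv n f).IsHomogeneous (t + 2) := by
  rw [deltaDInv_eq]
  refine MvPolynomial.IsHomogeneous.sum _ _ _ fun σ hσ => homog_smul ?_ _
  rw [Aux]
  have h1 := ser_homog (mon_homog σ) (σ (Fin.last n)) 2 (σ.degree + 1)
  have h2 := degree_erase_add σ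
  have h3 := isHomog_iff.1 hf σ hσ
  rwa [show (σ.erase (Fin.last n)).degree + σ (Fin.last n) + 2 = t + 2 by omega] at h1

lemma V1_homog {m : ℕ} (hm : 2 ≤ m) {p : PP n} (hp : p.IsHomogeneous (m-1)) :
    (V1 n m p).IsHomogeneous m := by
  rw [V1_eq]
  have := ser_homog (cpoly_homog hm hp) 0 1 (m+1)
  rwa [show m - 1 + 0 + 1 = m by omega] at this

lemma degree_eq_sum_univ (σ : Fin (n+1) →₀ ℕ) : σ.degree = ∑ i : Fin (n+1), σ i := by
  rw [Finsupp.degree]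
  exact Finset.sum_subset (Finset.subset_univ _) fun i _ hi => Finsupp.notMem_support_iff.1 hi

lemma euler {f : PP n} {k : ℕ} (h : f.IsHomogeneous k) :
    ∑ i : Fin (n+1), X i * pderiv (R := ℝ) i f = (k : ℝ) • f := by
  have h1 : ∀ i : Fin (n+1), X i * pderiv (R := ℝ) i f
      = ∑ σ ∈ f.support, ((σ i : ℕ) : ℝ) • monomial σ (coeff σ f) := by
    intro i
    conv_lhs => rw [f.as_sum]
    rw [map_sum, Finset.mul_sum]
    refine Finset.sum_congr rfl fun σ _ => ?_
    rw [pderiv_monomial]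
    rcases eq_or_ne (σ i) 0 with h0 | h0
    · rw [h0]; simp
    · have hadd : Finsupp.single i 1 + (σ - Finsupp.single i 1) = σ := by
        ext a
        simp only [Finsupp.add_apply, Finsupp.tsub_apply, Finsupp.single_apply]
        split_ifs with ha
        · subst ha; omega
        · omega
      rw [← pow_one (X i : PP n), MvPolynomial.X_pow_eq_monomial, MvPolynomial.monomial_mul,
        hadd, one_mul, MvPolynomial.smul_monomial, smul_eq_mul, mul_comm]
  calc ∑ i : Fin (n+1), X i * pderiv (R := ℝ) i f
      = ∑ i : Fin (n+1), ∑ σ ∈ f.support, ((σ i : ℕ) : ℝ) • monomial σ (coeff σ f) :=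
        Finset.sum_congr rfl fun i _ => h1 i
    _ = ∑ σ ∈ f.support, ∑ i : Fin (n+1), ((σ i : ℕ) : ℝ) • monomial σ (coeff σ f) :=
        Finset.sum_comm
    _ = (k : ℝ) • f := by
        conv_rhs => rw [f.as_sum]
        rw [Finset.smul_sum]
        refine Finset.sum_congr rfl fun σ hσ => ?_
        rw [← Finset.sum_smul, ← Nat.cast_sum, ← degree_eq_sum_univ, isHomog_iff.1 h σ hσ]

lemma homog_eq_zero_of_pderiv {f : PP n} {k : ℕ} (hk : k ≠ 0) (h : f.IsHomogeneous k)
    (hd : ∀ i, pderiv (R := ℝ) i f = 0) : f = 0 := by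
  have he := euler h
  rw [Finset.sum_eq_zero (fun i _ => by rw [hd i, mul_zero])] at he
  have hkne : (k:ℝ) ≠ 0 := Nat.cast_ne_zero.2 hk
  calc f = (k:ℝ)⁻¹ • ((k:ℝ) • f) := by rw [smul_smul, inv_mul_cancel₀ hkne, one_smul]
    _ = 0 := by rw [← he, smul_zero]

lemma intX0_eq (g : PP n) :
    intX0 n g = ∑ σ ∈ g.support,
      coeff σ g • ((((σ 0 : ℝ)+1))⁻¹ • monomial (σ + Finsupp.single 0 1) (1:ℝ)) := by
  rw [intX0]
  exact Finset.sum_congr rfl fun σ _ => by rw [div_eq_mul_inv, mul_smul]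

lemma intX0_add (p q : PP n) : intX0 n (p + q) = intX0 n p + intX0 n q := by
  rw [intX0_eq, intX0_eq, intX0_eq]; exact supportSum_add _ p q

lemma intX0_smul (c : ℝ) (p : PP n) : intX0 n (c • p) = c • intX0 n p := by
  rw [intX0_eq, intX0_eq]; exact supportSum_smul _ c p

lemma cpoly_add (p q : PP n) : cpoly n (p + q) = cpoly n p + cpoly n q := by
  rw [cpoly, cpoly, cpoly, map_add, map_add, intX0_add]
  ring

lemma cpoly_smul (c : ℝ) (p : PP n) : cpoly n (c • p) = c • cpoly n p := by
  rw [cpoly, cpoly, Derivation.map_smul, map_smul, intX0_smul, smul_neg]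

lemma V1_add (m : ℕ) (p q : PP n) : V1 n m (p + q) = V1 n m p + V1 n m q := by
  rw [V1_eq, V1_eq, V1_eq, cpoly_add, ser_add]

lemma V1_smul (m : ℕ) (c : ℝ) (p : PP n) : V1 n m (c • p) = c • V1 n m p := by
  rw [V1_eq, V1_eq, cpoly_smul, ser_smul]

lemma lapFull_Smap {m : ℕ} (hn : 0 < n) (hm : 2 ≤ m) {p : PP n}
    (hp : p.IsHomogeneous (m-1)) (k : Fin (n+1)) :
    lapFull n (Smap n m p k) = pderiv (R := ℝ) k p := by
  rw [Smap, map_add, lapFull_deltaDInv]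
  split_ifs with h
  · rw [lapFull_V1 hn hm hp, add_zero]
  · rw [map_zero, add_zero]

end Final
/-- for `d ≥ 2`, `m ≥ 2`, the map `S : 𝒜̇_{m-1}(ℝ^d) → 𝒫̇_m(ℝ^d)^d`,
`S[p] = U + V`, is linear and injective, and `(S[p],p) ∈ Ṡ_m(ℝ^d_+)` for every
`p ∈ 𝒜̇_{m-1}(ℝ^d)`. -/
theorem stmt6 (n m : ℕ) (hn : 1 ≤ n) (hm : 2 ≤ m) :
    (∀ (p q : MvPolynomial (Fin (n + 1)) ℝ),
      p.IsHomogeneous (m - 1) → lapFull n p = 0 →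
      q.IsHomogeneous (m - 1) → lapFull n q = 0 →
      ∀ a b : ℝ, Smap n m (a • p + b • q) = a • Smap n m p + b • Smap n m q) ∧
    (∀ (p q : MvPolynomial (Fin (n + 1)) ℝ),
      p.IsHomogeneous (m - 1) → lapFull n p = 0 →
      q.IsHomogeneous (m - 1) → lapFull n q = 0 →
      Smap n m p = Smap n m q → p = q) ∧
    (∀ p : MvPolynomial (Fin (n + 1)) ℝ,
      p.IsHomogeneous (m - 1) → lapFull n p = 0 →
      IsDotStokes n m (Smap n m p) p) := by
  have hn' : 0 < n := hn
  refine ⟨?_, ?_, ?_⟩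
  · -- linearity
    intro p q _ _ _ _ a b
    funext k
    simp only [Smap, Pi.add_apply, Pi.smul_apply]
    rw [map_add, Derivation.map_smul, Derivation.map_smul, deltaDInv_add, deltaDInv_smul,
      deltaDInv_smul, V1_add, V1_smul, V1_smul]
    split_ifs with h
    · simp only [smul_add]; ring
    · simp only [smul_add, smul_zero]; ring
  · -- injectivity
    intro p q hp hΔp hq hΔq hS
    have hd : ∀ k : Fin (n+1), pderiv (R := ℝ) k (p - q) = 0 := by
      intro k
      rw [map_sub, ← lapFull_Smap hn' hm hp k, ← lapFull_Smap hn' hm hq k,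
        congrFun hS k, sub_self]
    have hz : p - q = 0 := homog_eq_zero_of_pderiv (by omega) (hp.sub hq) hd
    exact sub_eq_zero.1 hz
  · -- Stokes system
    intro p hp hΔp
    refine ⟨?_, hp, ?_, ?_, ?_⟩
    · intro k
      have h1 := deltaDInv_homog (homog_pderiv hp k)
      rw [show m - 1 - 1 + 2 = m by omega] at h1
      simp only [Smap]
      split_ifs with h
      · exact h1.add (V1_homog hm hp)
      · rw [add_zero]; exact h1
    · intro k
      rw [lapFull_Smap hn' hm hp k]
      ring
    · rw [div_Smap hn' hm hp, hΔp, deltaDInv_zero]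
    · intro x k
      simp only [Smap]
      rw [map_add, eval_deltaDInv_zero]
      split_ifs with h
      · rw [eval_V1_zero, add_zero]
      · rw [map_zero, add_zero]
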